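/- Let r, B, C > 0, D ≥ 0, n ≥ 1 with rBn - D ≠ 0 and rB(n+1) - D ≠ 0, and fix Δ > 0 and h > 0. Define g_{(n,h,Δ)}(s) = φ_{n+1}(φ_n(h,s), Δ - s) for s ∈ [0, Δ], where φ_m is the logistic flow y' = y(rBm - D - Cy). Then d/ds g_{(n,h,Δ)}(s) = -rB · g_{(n,h,Δ)}(s) / (1 + (φ_n(h,s)·C/(rB(n+1)-D))·(e^{(rB(n+1)-D)(Δ-s)} - 1)) < 0 for all s ∈ (0, Δ); in particular g_{(n,h,Δ)} is strictly decreasing on [0, Δ]. -/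

import Mathlib

/-!
Write `a = rBn - D`, `b = rB(n+1) - D` and `y = φ_n(h, ·)`, so that `g(s) = φ_{n+1}(y(s), Δ - s)`.
Differentiating the closed form of `φ_{n+1}` in `s` and using only that `y` solves
`y' = y (a - C y)`, the logistic terms of the two flows cancel and `g' = (a - b) g / Q`, where `Q`
is the denominator of `φ_{n+1}(y(s), Δ - s)`. For `0 ≤ s ≤ Δ` both `g` and `Q` are positive, and
`a - b = -rB < 0`.
-/

noncomputable def phi (r B C D : ℝ) (n : ℕ) (h t : ℝ) : ℝ :=
  h * Real.exp (t * (r * B * n - D)) /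
    (1 + h * C / (r * B * n - D) * (Real.exp (t * (r * B * n - D)) - 1))

/-- Predator density at time `Δ` if the single prey birth occurred at time `s`. -/
noncomputable def gfun (r B C D : ℝ) (n : ℕ) (h Δ s : ℝ) : ℝ :=
  phi r B C D (n + 1) (phi r B C D n h s) (Δ - s)

noncomputable section

def logisticDenom (a C y t : ℝ) : ℝ := 1 + y * C / a * (Real.exp (t * a) - 1)

def logisticFlow (a C y t : ℝ) : ℝ := y * Real.exp (t * a) / logisticDenom a C y t

def switchedFlow (a b C h Δ s : ℝ) : ℝ := logisticFlow b C (logisticFlow a C h s) (Δ - s)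

end

section

variable {a b C y t : ℝ}

theorem logisticDenom_pos (hy : 0 ≤ y) (hC : 0 ≤ C) (ht : 0 ≤ t) :
    0 < logisticDenom a C y t := by
  have hgrowth : 0 ≤ (Real.exp (t * a) - 1) / a := by
    rcases le_total 0 a with ha | ha
    · exact div_nonneg (by simpa using Real.one_le_exp (mul_nonneg ht ha)) ha
    · exact div_nonneg_of_nonpos
        (by simpa using Real.exp_le_one_iff.mpr (mul_nonpos_of_nonneg_of_nonpos ht ha)) ha
  have : 0 ≤ y * C * ((Real.exp (t * a) - 1) / a) := mul_nonneg (mul_nonneg hy hC) hgrowth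
  rw [logisticDenom, div_mul_eq_mul_div, mul_div_assoc]
  linarith

theorem logisticFlow_pos (hy : 0 < y) (hC : 0 ≤ C) (ht : 0 ≤ t) :
    0 < logisticFlow a C y t :=
  div_pos (mul_pos hy (Real.exp_pos _)) (logisticDenom_pos hy.le hC ht)

theorem hasDerivAt_logisticFlow (ha : a ≠ 0) (hQ : logisticDenom a C y t ≠ 0) :
    HasDerivAt (logisticFlow a C y)
      (logisticFlow a C y t * (a - C * logisticFlow a C y t)) t := by
  have hexp : HasDerivAt (fun u => Real.exp (u * a)) (Real.exp (t * a) * a) t := by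
    simpa using ((hasDerivAt_id t).mul_const a).exp
  have := (hexp.const_mul y).div (((hexp.sub_const 1).const_mul (y * C / a)).const_add 1) hQ
  refine this.congr_deriv ?_
  simp only [logisticFlow, logisticDenom] at hQ ⊢
  generalize Real.exp _ = E at hQ ⊢
  have hQ' : a + y * C * (E - 1) ≠ 0 := by
    contrapose! hQ; field_simp; linarith
  field_simp

theorem HasDerivAt.logisticFlow_switch {x : ℝ → ℝ} {s : ℝ} (Δ : ℝ)
    (hx : HasDerivAt x (x s * (a - C * x s)) s) (hb : b ≠ 0)
    (hQ : logisticDenom b C (x s) (Δ - s) ≠ 0) :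
    HasDerivAt (fun u => logisticFlow b C (x u) (Δ - u))
      ((a - b) * logisticFlow b C (x s) (Δ - s) / logisticDenom b C (x s) (Δ - s)) s := by
  have hexp : HasDerivAt (fun u => Real.exp ((Δ - u) * b)) (Real.exp ((Δ - s) * b) * -b) s := by
    simpa using (((hasDerivAt_id s).const_sub Δ).mul_const b).exp
  have := (hx.mul hexp).div (((hx.mul_const C).div_const b).mul (hexp.sub_const 1) |>.const_add 1) hQ
  refine this.congr_deriv ?_
  simp only [logisticFlow, logisticDenom, Pi.mul_apply] at hQ ⊢
  generalize Real.exp _ = E at hQ ⊢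
  generalize x s = z at hQ ⊢
  have hQ' : b + z * C * (E - 1) ≠ 0 := by
    contrapose! hQ; field_simp; linarith
  field_simp
  ring

end

section

variable {a b C h Δ : ℝ}

theorem hasDerivAt_switchedFlow {s : ℝ} (ha : a ≠ 0) (hb : b ≠ 0) (hh : 0 ≤ h) (hC : 0 ≤ C)
    (hs : 0 ≤ s) (hsΔ : s ≤ Δ) :
    HasDerivAt (switchedFlow a b C h Δ)
      ((a - b) * switchedFlow a b C h Δ s / logisticDenom b C (logisticFlow a C h s) (Δ - s)) s := by
  have hQa := logisticDenom_pos (a := a) hh hC hs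
  have hflow : 0 ≤ logisticFlow a C h s :=
    div_nonneg (mul_nonneg hh (Real.exp_pos _).le) hQa.le
  exact (hasDerivAt_logisticFlow ha hQa.ne').logisticFlow_switch Δ hb
    (logisticDenom_pos hflow hC (sub_nonneg.mpr hsΔ)).ne'

theorem switchedFlow_pos {s : ℝ} (hh : 0 < h) (hC : 0 ≤ C) (hs : 0 ≤ s) (hsΔ : s ≤ Δ) :
    0 < switchedFlow a b C h Δ s :=
  logisticFlow_pos (logisticFlow_pos hh hC hs) hC (sub_nonneg.mpr hsΔ)

theorem switchedFlow_deriv_neg {s : ℝ} (hab : a < b) (hh : 0 < h) (hC : 0 ≤ C) (hs : 0 ≤ s)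
    (hsΔ : s ≤ Δ) :
    (a - b) * switchedFlow a b C h Δ s / logisticDenom b C (logisticFlow a C h s) (Δ - s) < 0 :=
  div_neg_of_neg_of_pos (mul_neg_of_neg_of_pos (sub_neg.mpr hab) (switchedFlow_pos hh hC hs hsΔ))
    (logisticDenom_pos (logisticFlow_pos hh hC hs).le hC (sub_nonneg.mpr hsΔ))

theorem strictAntiOn_switchedFlow (hab : a < b) (ha : a ≠ 0) (hb : b ≠ 0) (hh : 0 < h)
    (hC : 0 ≤ C) : StrictAntiOn (switchedFlow a b C h Δ) (Set.Icc 0 Δ) := by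
  have hderiv (s : ℝ) (hs : s ∈ Set.Icc 0 Δ) := hasDerivAt_switchedFlow ha hb hh.le hC hs.1 hs.2
  refine strictAntiOn_of_deriv_neg (convex_Icc 0 Δ)
    (fun s hs => (hderiv s hs).continuousAt.continuousWithinAt) fun s hs => ?_
  rw [interior_Icc] at hs
  rw [(hderiv s (Set.Ioo_subset_Icc_self hs)).deriv]
  exact switchedFlow_deriv_neg hab hh hC hs.1.le hs.2.le

end

theorem stmt_12_general (r B C D : ℝ) (hr : 0 < r) (hB : 0 < B) (hC : 0 < C)
    (n : ℕ) (ha : r * B * n - D ≠ 0) (ha' : r * B * (n + 1 : ℕ) - D ≠ 0)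
    (Δ h : ℝ) (hh : 0 < h) :
    (∀ s ∈ Set.Ioo (0 : ℝ) Δ,
      HasDerivAt (fun u => gfun r B C D n h Δ u)
        (-(r * B) * gfun r B C D n h Δ s /
          (1 + phi r B C D n h s * C / (r * B * (n + 1 : ℕ) - D) *
            (Real.exp ((r * B * (n + 1 : ℕ) - D) * (Δ - s)) - 1))) s ∧
      -(r * B) * gfun r B C D n h Δ s /
          (1 + phi r B C D n h s * C / (r * B * (n + 1 : ℕ) - D) *
            (Real.exp ((r * B * (n + 1 : ℕ) - D) * (Δ - s)) - 1)) < 0) ∧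
    StrictAntiOn (fun u => gfun r B C D n h Δ u) (Set.Icc 0 Δ) := by
  have hrate : (r * B * n - D) - (r * B * (n + 1 : ℕ) - D) = -(r * B) := by push_cast; ring
  have hg : gfun r B C D n h Δ = switchedFlow (r * B * n - D) (r * B * (n + 1 : ℕ) - D) C h Δ := rfl
  have hab : r * B * n - D < r * B * (n + 1 : ℕ) - D := by linarith [mul_pos hr hB]
  refine ⟨fun s hs => ?_, hg ▸ strictAntiOn_switchedFlow hab ha ha' hh hC.le⟩
  have hdenom : 1 + phi r B C D n h s * C / (r * B * (n + 1 : ℕ) - D) *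
      (Real.exp ((r * B * (n + 1 : ℕ) - D) * (Δ - s)) - 1)
      = logisticDenom (r * B * (n + 1 : ℕ) - D) C (phi r B C D n h s) (Δ - s) := by
    rw [logisticDenom, mul_comm (Δ - s)]
  rw [hdenom, hg, ← hrate]
  exact ⟨hasDerivAt_switchedFlow ha ha' hh.le hC.le hs.1.le hs.2.le,
    switchedFlow_deriv_neg hab hh hC.le hs.1.le hs.2.le⟩

theorem stmt_12 (r B C D : ℝ) (hr : 0 < r) (hB : 0 < B) (hC : 0 < C) (hD : 0 ≤ D)
    (n : ℕ) (hn : 1 ≤ n) (ha : r * B * n - D ≠ 0) (ha' : r * B * (n + 1 : ℕ) - D ≠ 0)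
    (Δ h : ℝ) (hΔ : 0 < Δ) (hh : 0 < h) :
    (∀ s ∈ Set.Ioo (0 : ℝ) Δ,
      HasDerivAt (fun u => gfun r B C D n h Δ u)
        (-(r * B) * gfun r B C D n h Δ s /
          (1 + phi r B C D n h s * C / (r * B * (n + 1 : ℕ) - D) *
            (Real.exp ((r * B * (n + 1 : ℕ) - D) * (Δ - s)) - 1))) s ∧
      -(r * B) * gfun r B C D n h Δ s /
          (1 + phi r B C D n h s * C / (r * B * (n + 1 : ℕ) - D) *
            (Real.exp ((r * B * (n + 1 : ℕ) - D) * (Δ - s)) - 1)) < 0) ∧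
    StrictAntiOn (fun u => gfun r B C D n h Δ u) (Set.Icc 0 Δ) :=
  stmt_12_general r B C D hr hB hC n ha ha' Δ h hh
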